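/- arXiv:1809.06522 — 2 statements merged into one kernel-verified Lean document; each statement's English description precedes it below -/
import Mathlib

section
/- For any two distinct indices i ≠ j, with X_i = (p̂_i − p_i)²/p_i − (1 − p_i)/n and X_j = (p̂_j − p_j)²/p_j − (1 − p_j)/n, one has E[X_i·X_j] = (2(p_i + p_j) − 1 + 2(n−3)·p_i·p_j)/n³. -/
/-- The empirical distribution of `n` samples `ω : Fin n → Fin k`. -/
noncomputable def empDist {n k : ℕ} (ω : Fin n → Fin k) (i : Fin k) : ℝ :=
  ((Finset.univ.filter (fun j => ω j = i)).card : ℝ) / n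

open Classical in
/-- Probability of the event `E` under `n` i.i.d. samples from the distribution `p` on `Fin k`. -/
noncomputable def probOf {n k : ℕ} (p : Fin k → ℝ) (E : Set (Fin n → Fin k)) : ℝ :=
  ∑ ω : Fin n → Fin k, if ω ∈ E then ∏ j, p (ω j) else 0

/-- Kullback–Leibler divergence `D(q ‖ p)` (with the convention `0 · log 0 = 0`,
which holds automatically since `Real.log 0 = 0`). -/
noncomputable def klDiv {k : ℕ} (q p : Fin k → ℝ) : ℝ :=
  ∑ i, q i * Real.log (q i / p i)

/-- Expectation of `f` under `n` i.i.d. samples from the distribution `p` on `Fin k`. -/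
noncomputable def expect {n k : ℕ} (p : Fin k → ℝ) (f : (Fin n → Fin k) → ℝ) : ℝ :=
  ∑ ω : Fin n → Fin k, (∏ j, p (ω j)) * f ω

/-- Variance of `f` under `n` i.i.d. samples from the distribution `p` on `Fin k`. -/
noncomputable def var {n k : ℕ} (p : Fin k → ℝ) (f : (Fin n → Fin k) → ℝ) : ℝ :=
  expect p (fun ω => (f ω - expect p f) ^ 2)

noncomputable def Sf {k : ℕ} (p : Fin k → ℝ) (i : Fin k) (n : ℕ) (ω : Fin n → Fin k) : ℝ :=
  ∑ m, ((if ω m = i then (1:ℝ) else 0) - p i)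

variable {k : ℕ}

lemma expect_succ {n : ℕ} (p : Fin k → ℝ) (f : (Fin (n+1) → Fin k) → ℝ) :
    expect p f = ∑ x : Fin k, p x * expect p (fun ω : Fin n → Fin k => f (Fin.cons x ω)) := by
  unfold expect
  rw [← (Fin.consEquiv (fun _ : Fin (n+1) => Fin k)).sum_comp
      (fun ω => (∏ j, p (ω j)) * f ω), Fintype.sum_prod_type]
  refine Finset.sum_congr rfl fun x _ => ?_
  rw [Finset.mul_sum]
  refine Finset.sum_congr rfl fun ω _ => ?_
  simp [Fin.consEquiv, Fin.prod_univ_succ, mul_assoc]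

lemma expect_add {n : ℕ} (p : Fin k → ℝ) (f g : (Fin n → Fin k) → ℝ) :
    expect p (fun ω => f ω + g ω) = expect p f + expect p g := by
  simp [expect, mul_add, Finset.sum_add_distrib]

lemma expect_cmul {n : ℕ} (p : Fin k → ℝ) (c : ℝ) (f : (Fin n → Fin k) → ℝ) :
    expect p (fun ω => c * f ω) = c * expect p f := by
  simp only [expect, Finset.mul_sum]
  exact Finset.sum_congr rfl fun _ _ => by ring

lemma expect_const {n : ℕ} (p : Fin k → ℝ) (hsum : ∑ x, p x = 1) (c : ℝ) :
    expect p (fun _ : Fin n → Fin k => c) = c := by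
  induction n with
  | zero => simp [expect]
  | succ n ih =>
      rw [expect_succ p (fun _ => c)]
      simp only [ih, ← Finset.sum_mul, hsum, one_mul]

lemma Sf_cons {n : ℕ} (p : Fin k → ℝ) (i : Fin k) (x : Fin k) (ω : Fin n → Fin k) :
    Sf p i (n+1) (Fin.cons x ω) = ((if x = i then (1:ℝ) else 0) - p i) + Sf p i n ω := by
  simp only [Sf, Fin.sum_univ_succ, Fin.cons_zero, Fin.cons_succ]

lemma Esum (p : Fin k → ℝ) (i j : Fin k) (hsum : ∑ x, p x = 1) (hij : i ≠ j) (c d : ℕ) :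
    ∑ x, p x * (((if x = i then (1:ℝ) else 0) - p i) ^ c *
        ((if x = j then (1:ℝ) else 0) - p j) ^ d)
      = p i * ((1 - p i) ^ c * (0 - p j) ^ d) + p j * ((0 - p i) ^ c * (1 - p j) ^ d)
        + (1 - p i - p j) * ((0 - p i) ^ c * (0 - p j) ^ d) := by
  have key : ∀ x : Fin k, p x * (((if x = i then (1:ℝ) else 0) - p i) ^ c *
        ((if x = j then (1:ℝ) else 0) - p j) ^ d)
      = (if x = i then p x * ((1 - p i) ^ c * (0 - p j) ^ d
              - (0 - p i) ^ c * (0 - p j) ^ d) else 0)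
        + (if x = j then p x * ((0 - p i) ^ c * (1 - p j) ^ d
              - (0 - p i) ^ c * (0 - p j) ^ d) else 0)
        + p x * ((0 - p i) ^ c * (0 - p j) ^ d) := by
    intro x
    by_cases hxi : x = i <;> by_cases hxj : x = j
    · exact absurd (hxi.symm.trans hxj) hij
    · simp [hxi, hij]
      ring
    · simp [hxj, Ne.symm hij]
      ring
    · simp only [if_neg hxi, if_neg hxj]
      ring
  rw [Finset.sum_congr rfl fun x _ => key x, Finset.sum_add_distrib, Finset.sum_add_distrib,
    Finset.sum_ite_eq' Finset.univ i, Finset.sum_ite_eq' Finset.univ j,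
    ← Finset.sum_mul, hsum]
  simp only [Finset.mem_univ, if_pos]
  ring

lemma moments (p : Fin k → ℝ) (i j : Fin k) (hsum : ∑ x, p x = 1) (hij : i ≠ j) (n : ℕ) :
    expect p (fun ω : Fin n → Fin k => Sf p i n ω) = 0 ∧
    expect p (fun ω : Fin n → Fin k => Sf p j n ω) = 0 ∧
    expect p (fun ω : Fin n → Fin k => Sf p i n ω ^ 2) = (n : ℝ) * (p i * (1 - p i)) ∧
    expect p (fun ω : Fin n → Fin k => Sf p j n ω ^ 2) = (n : ℝ) * (p j * (1 - p j)) ∧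
    expect p (fun ω : Fin n → Fin k => Sf p i n ω * Sf p j n ω) = (n : ℝ) * (-(p i * p j)) ∧
    expect p (fun ω : Fin n → Fin k => Sf p i n ω ^ 2 * Sf p j n ω) = (n : ℝ) * (p i * p j * (2 * p i - 1)) ∧
    expect p (fun ω : Fin n → Fin k => Sf p i n ω * Sf p j n ω ^ 2) = (n : ℝ) * (p i * p j * (2 * p j - 1)) ∧
    expect p (fun ω : Fin n → Fin k => Sf p i n ω ^ 2 * Sf p j n ω ^ 2) =
      (n : ℝ) * (p i * p j * (p i + p j - 3 * p i * p j)) + (n : ℝ) * ((n : ℝ) - 1) * ((p i * (1 - p i)) * (p j * (1 - p j)) + 2 * (p i * p j) ^ 2) := by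
  induction n with
  | zero =>
      refine ⟨?_, ?_, ?_, ?_, ?_, ?_, ?_, ?_⟩ <;> norm_num [expect, Sf]
  | succ n ih =>
      obtain ⟨h10, h01, h20, h02, h11, h21, h12, h22⟩ := ih
      refine ⟨?_, ?_, ?_, ?_, ?_, ?_, ?_, ?_⟩
      · rw [expect_succ]
        simp only [Sf_cons]
        have hexp : ∀ x : Fin k, p x * expect p (fun ω : Fin n → Fin k =>
            ((if x = i then (1:ℝ) else 0) - p i) + Sf p i n ω)
            = p x * (((if x = i then (1:ℝ) else 0) - p i) ^ 1 * ((if x = j then (1:ℝ) else 0) - p j) ^ 0) := by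
          intro x
          simp only [expect_add, expect_cmul, expect_const p hsum]
          rw [h10]
          ring
        simp only [hexp, Finset.sum_add_distrib, ← Finset.mul_sum]
        rw [Esum p i j hsum hij 1 0]
        ring
      · rw [expect_succ]
        simp only [Sf_cons]
        have hexp : ∀ x : Fin k, p x * expect p (fun ω : Fin n → Fin k =>
            ((if x = j then (1:ℝ) else 0) - p j) + Sf p j n ω)
            = p x * (((if x = i then (1:ℝ) else 0) - p i) ^ 0 * ((if x = j then (1:ℝ) else 0) - p j) ^ 1) := by
          intro x
          simp only [expect_add, expect_cmul, expect_const p hsum]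
          rw [h01]
          ring
        simp only [hexp, Finset.sum_add_distrib, ← Finset.mul_sum]
        rw [Esum p i j hsum hij 0 1]
        ring
      · rw [expect_succ]
        simp only [Sf_cons]
        have hexp : ∀ x : Fin k, p x * expect p (fun ω : Fin n → Fin k =>
            (((if x = i then (1:ℝ) else 0) - p i) + Sf p i n ω) ^ 2)
            = p x * (((if x = i then (1:ℝ) else 0) - p i) ^ 2 * ((if x = j then (1:ℝ) else 0) - p j) ^ 0) + ((n : ℝ) * (p i * (1 - p i))) * (p x * (((if x = i then (1:ℝ) else 0) - p i) ^ 0 * ((if x = j then (1:ℝ) else 0) - p j) ^ 0)) := by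
          intro x
          rw [show (fun ω : Fin n → Fin k => (((if x = i then (1:ℝ) else 0) - p i) + Sf p i n ω) ^ 2)
              = (fun ω : Fin n → Fin k => ((if x = i then (1:ℝ) else 0) - p i) ^ 2 + (2 * ((if x = i then (1:ℝ) else 0) - p i)) * Sf p i n ω + Sf p i n ω ^ 2) from funext fun ω => by ring]
          simp only [expect_add, expect_cmul, expect_const p hsum]
          rw [h10, h20]
          ring
        simp only [hexp, Finset.sum_add_distrib, ← Finset.mul_sum]
        rw [Esum p i j hsum hij 2 0, Esum p i j hsum hij 0 0]
        push_cast
        ring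
      · rw [expect_succ]
        simp only [Sf_cons]
        have hexp : ∀ x : Fin k, p x * expect p (fun ω : Fin n → Fin k =>
            (((if x = j then (1:ℝ) else 0) - p j) + Sf p j n ω) ^ 2)
            = p x * (((if x = i then (1:ℝ) else 0) - p i) ^ 0 * ((if x = j then (1:ℝ) else 0) - p j) ^ 2) + ((n : ℝ) * (p j * (1 - p j))) * (p x * (((if x = i then (1:ℝ) else 0) - p i) ^ 0 * ((if x = j then (1:ℝ) else 0) - p j) ^ 0)) := by
          intro x
          rw [show (fun ω : Fin n → Fin k => (((if x = j then (1:ℝ) else 0) - p j) + Sf p j n ω) ^ 2)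
              = (fun ω : Fin n → Fin k => ((if x = j then (1:ℝ) else 0) - p j) ^ 2 + (2 * ((if x = j then (1:ℝ) else 0) - p j)) * Sf p j n ω + Sf p j n ω ^ 2) from funext fun ω => by ring]
          simp only [expect_add, expect_cmul, expect_const p hsum]
          rw [h01, h02]
          ring
        simp only [hexp, Finset.sum_add_distrib, ← Finset.mul_sum]
        rw [Esum p i j hsum hij 0 2, Esum p i j hsum hij 0 0]
        push_cast
        ring
      · rw [expect_succ]
        simp only [Sf_cons]
        have hexp : ∀ x : Fin k, p x * expect p (fun ω : Fin n → Fin k =>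
            (((if x = i then (1:ℝ) else 0) - p i) + Sf p i n ω) * (((if x = j then (1:ℝ) else 0) - p j) + Sf p j n ω))
            = p x * (((if x = i then (1:ℝ) else 0) - p i) ^ 1 * ((if x = j then (1:ℝ) else 0) - p j) ^ 1) + ((n : ℝ) * (-(p i * p j))) * (p x * (((if x = i then (1:ℝ) else 0) - p i) ^ 0 * ((if x = j then (1:ℝ) else 0) - p j) ^ 0)) := by
          intro x
          rw [show (fun ω : Fin n → Fin k => (((if x = i then (1:ℝ) else 0) - p i) + Sf p i n ω) * (((if x = j then (1:ℝ) else 0) - p j) + Sf p j n ω))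
              = (fun ω : Fin n → Fin k => ((if x = i then (1:ℝ) else 0) - p i) * ((if x = j then (1:ℝ) else 0) - p j) + ((if x = i then (1:ℝ) else 0) - p i) * (Sf p j n ω) + ((if x = j then (1:ℝ) else 0) - p j) * (Sf p i n ω) + Sf p i n ω * Sf p j n ω) from funext fun ω => by ring]
          simp only [expect_add, expect_cmul, expect_const p hsum]
          rw [h10, h01, h11]
          ring
        simp only [hexp, Finset.sum_add_distrib, ← Finset.mul_sum]
        rw [Esum p i j hsum hij 1 1, Esum p i j hsum hij 0 0]
        push_cast
        ring
      · rw [expect_succ]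
        simp only [Sf_cons]
        have hexp : ∀ x : Fin k, p x * expect p (fun ω : Fin n → Fin k =>
            (((if x = i then (1:ℝ) else 0) - p i) + Sf p i n ω) ^ 2 * (((if x = j then (1:ℝ) else 0) - p j) + Sf p j n ω))
            = p x * (((if x = i then (1:ℝ) else 0) - p i) ^ 2 * ((if x = j then (1:ℝ) else 0) - p j) ^ 1) + (2 * (n : ℝ) * (-(p i * p j))) * (p x * (((if x = i then (1:ℝ) else 0) - p i) ^ 1 * ((if x = j then (1:ℝ) else 0) - p j) ^ 0)) + ((n : ℝ) * (p i * (1 - p i))) * (p x * (((if x = i then (1:ℝ) else 0) - p i) ^ 0 * ((if x = j then (1:ℝ) else 0) - p j) ^ 1)) + ((n : ℝ) * (p i * p j * (2 * p i - 1))) * (p x * (((if x = i then (1:ℝ) else 0) - p i) ^ 0 * ((if x = j then (1:ℝ) else 0) - p j) ^ 0)) := by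
          intro x
          rw [show (fun ω : Fin n → Fin k => (((if x = i then (1:ℝ) else 0) - p i) + Sf p i n ω) ^ 2 * (((if x = j then (1:ℝ) else 0) - p j) + Sf p j n ω))
              = (fun ω : Fin n → Fin k => ((if x = i then (1:ℝ) else 0) - p i) ^ 2 * ((if x = j then (1:ℝ) else 0) - p j) + ((if x = i then (1:ℝ) else 0) - p i) ^ 2 * (Sf p j n ω) + (2 * ((if x = i then (1:ℝ) else 0) - p i) * ((if x = j then (1:ℝ) else 0) - p j)) * (Sf p i n ω) + (2 * ((if x = i then (1:ℝ) else 0) - p i)) * (Sf p i n ω * Sf p j n ω) + ((if x = j then (1:ℝ) else 0) - p j) * (Sf p i n ω ^ 2) + Sf p i n ω ^ 2 * Sf p j n ω) from funext fun ω => by ring]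
          simp only [expect_add, expect_cmul, expect_const p hsum]
          rw [h10, h01, h11, h20, h21]
          ring
        simp only [hexp, Finset.sum_add_distrib, ← Finset.mul_sum]
        rw [Esum p i j hsum hij 2 1, Esum p i j hsum hij 1 0, Esum p i j hsum hij 0 1, Esum p i j hsum hij 0 0]
        push_cast
        ring
      · rw [expect_succ]
        simp only [Sf_cons]
        have hexp : ∀ x : Fin k, p x * expect p (fun ω : Fin n → Fin k =>
            (((if x = i then (1:ℝ) else 0) - p i) + Sf p i n ω) * (((if x = j then (1:ℝ) else 0) - p j) + Sf p j n ω) ^ 2)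
            = p x * (((if x = i then (1:ℝ) else 0) - p i) ^ 1 * ((if x = j then (1:ℝ) else 0) - p j) ^ 2) + (2 * (n : ℝ) * (-(p i * p j))) * (p x * (((if x = i then (1:ℝ) else 0) - p i) ^ 0 * ((if x = j then (1:ℝ) else 0) - p j) ^ 1)) + ((n : ℝ) * (p j * (1 - p j))) * (p x * (((if x = i then (1:ℝ) else 0) - p i) ^ 1 * ((if x = j then (1:ℝ) else 0) - p j) ^ 0)) + ((n : ℝ) * (p i * p j * (2 * p j - 1))) * (p x * (((if x = i then (1:ℝ) else 0) - p i) ^ 0 * ((if x = j then (1:ℝ) else 0) - p j) ^ 0)) := by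
          intro x
          rw [show (fun ω : Fin n → Fin k => (((if x = i then (1:ℝ) else 0) - p i) + Sf p i n ω) * (((if x = j then (1:ℝ) else 0) - p j) + Sf p j n ω) ^ 2)
              = (fun ω : Fin n → Fin k => ((if x = i then (1:ℝ) else 0) - p i) * ((if x = j then (1:ℝ) else 0) - p j) ^ 2 + (2 * ((if x = i then (1:ℝ) else 0) - p i) * ((if x = j then (1:ℝ) else 0) - p j)) * (Sf p j n ω) + ((if x = i then (1:ℝ) else 0) - p i) * (Sf p j n ω ^ 2) + ((if x = j then (1:ℝ) else 0) - p j) ^ 2 * (Sf p i n ω) + (2 * ((if x = j then (1:ℝ) else 0) - p j)) * (Sf p i n ω * Sf p j n ω) + Sf p i n ω * Sf p j n ω ^ 2) from funext fun ω => by ring]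
          simp only [expect_add, expect_cmul, expect_const p hsum]
          rw [h10, h01, h11, h02, h12]
          ring
        simp only [hexp, Finset.sum_add_distrib, ← Finset.mul_sum]
        rw [Esum p i j hsum hij 1 2, Esum p i j hsum hij 0 1, Esum p i j hsum hij 1 0, Esum p i j hsum hij 0 0]
        push_cast
        ring
      · rw [expect_succ]
        simp only [Sf_cons]
        have hexp : ∀ x : Fin k, p x * expect p (fun ω : Fin n → Fin k =>
            (((if x = i then (1:ℝ) else 0) - p i) + Sf p i n ω) ^ 2 * (((if x = j then (1:ℝ) else 0) - p j) + Sf p j n ω) ^ 2)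
            = p x * (((if x = i then (1:ℝ) else 0) - p i) ^ 2 * ((if x = j then (1:ℝ) else 0) - p j) ^ 2) + ((n : ℝ) * (p j * (1 - p j))) * (p x * (((if x = i then (1:ℝ) else 0) - p i) ^ 2 * ((if x = j then (1:ℝ) else 0) - p j) ^ 0)) + (4 * (n : ℝ) * (-(p i * p j))) * (p x * (((if x = i then (1:ℝ) else 0) - p i) ^ 1 * ((if x = j then (1:ℝ) else 0) - p j) ^ 1)) + (2 * (n : ℝ) * (p i * p j * (2 * p j - 1))) * (p x * (((if x = i then (1:ℝ) else 0) - p i) ^ 1 * ((if x = j then (1:ℝ) else 0) - p j) ^ 0)) + ((n : ℝ) * (p i * (1 - p i))) * (p x * (((if x = i then (1:ℝ) else 0) - p i) ^ 0 * ((if x = j then (1:ℝ) else 0) - p j) ^ 2)) + (2 * (n : ℝ) * (p i * p j * (2 * p i - 1))) * (p x * (((if x = i then (1:ℝ) else 0) - p i) ^ 0 * ((if x = j then (1:ℝ) else 0) - p j) ^ 1)) + ((n : ℝ) * (p i * p j * (p i + p j - 3 * p i * p j)) + (n : ℝ) * ((n : ℝ) - 1) * ((p i * (1 - p i)) * (p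 j * (1 - p j)) + 2 * (p i * p j) ^ 2)) * (p x * (((if x = i then (1:ℝ) else 0) - p i) ^ 0 * ((if x = j then (1:ℝ) else 0) - p j) ^ 0)) := by
          intro x
          rw [show (fun ω : Fin n → Fin k => (((if x = i then (1:ℝ) else 0) - p i) + Sf p i n ω) ^ 2 * (((if x = j then (1:ℝ) else 0) - p j) + Sf p j n ω) ^ 2)
              = (fun ω : Fin n → Fin k => ((if x = i then (1:ℝ) else 0) - p i) ^ 2 * ((if x = j then (1:ℝ) else 0) - p j) ^ 2 + (2 * ((if x = i then (1:ℝ) else 0) - p i) ^ 2 * ((if x = j then (1:ℝ) else 0) - p j)) * (Sf p j n ω) + ((if x = i then (1:ℝ) else 0) - p i) ^ 2 * (Sf p j n ω ^ 2) + (2 * ((if x = i then (1:ℝ) else 0) - p i) * ((if x = j then (1:ℝ) else 0) - p j) ^ 2) * (Sf p i n ω) + (4 * ((if x = i then (1:ℝ) else 0) - p i) * ((if x = j then (1:ℝ) else 0) - p j)) * (Sf p i n ω * Sf p j n ω) + (2 * ((if x = i then (1:ℝ) else 0) - p i)) * (Sf p i n ω * Sf p j n ω ^ 2) + ((if x = j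 then (1:ℝ) else 0) - p j) ^ 2 * (Sf p i n ω ^ 2) + (2 * ((if x = j then (1:ℝ) else 0) - p j)) * (Sf p i n ω ^ 2 * Sf p j n ω) + Sf p i n ω ^ 2 * Sf p j n ω ^ 2) from funext fun ω => by ring]
          simp only [expect_add, expect_cmul, expect_const p hsum]
          rw [h10, h01, h11, h20, h02, h21, h12, h22]
          ring
        simp only [hexp, Finset.sum_add_distrib, ← Finset.mul_sum]
        rw [Esum p i j hsum hij 2 2, Esum p i j hsum hij 2 0, Esum p i j hsum hij 1 1, Esum p i j hsum hij 1 0, Esum p i j hsum hij 0 2, Esum p i j hsum hij 0 1, Esum p i j hsum hij 0 0]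
        push_cast
        ring

/-- Lemma 8, cross-moment identity: with `Xᵢ = (p̂ᵢ − pᵢ)²/pᵢ − (1 − pᵢ)/n`, for `i ≠ j`,
`E[Xᵢ·Xⱼ] = (2(pᵢ + pⱼ) − 1 + 2(n−3)pᵢpⱼ)/n³`. -/
theorem quadratic_cross_moment (n k : ℕ) (hn : 1 ≤ n) (hk : 2 ≤ k)
    (p : Fin k → ℝ) (hpos : ∀ i, 0 < p i) (hsum : ∑ i, p i = 1)
    (i j : Fin k) (hij : i ≠ j) :
    expect p (fun ω : Fin n → Fin k =>
        ((empDist ω i - p i) ^ 2 / p i - (1 - p i) / n) *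
        ((empDist ω j - p j) ^ 2 / p j - (1 - p j) / n)) =
      (2 * (p i + p j) - 1 + 2 * ((n : ℝ) - 3) * p i * p j) / (n : ℝ) ^ 3 := by
  have hn0 : (n : ℝ) ≠ 0 := Nat.cast_ne_zero.mpr (by omega)
  have hpi : p i ≠ 0 := (hpos i).ne'
  have hpj : p j ≠ 0 := (hpos j).ne'
  obtain ⟨h10, h01, h20, h02, h11, h21, h12, h22⟩ := moments p i j hsum hij n
  have hemp : ∀ (t : Fin k) (ω : Fin n → Fin k), empDist ω t - p t = Sf p t n ω / ↑n := by
    intro t ω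
    have hS : Sf p t n ω = ((Finset.univ.filter (fun m => ω m = t)).card : ℝ) - n * p t := by
      simp [Sf, Finset.sum_sub_distrib, Finset.sum_boole, mul_comm]
    rw [hS]
    unfold empDist
    field_simp
  have hfun : ∀ ω : Fin n → Fin k,
      ((empDist ω i - p i) ^ 2 / p i - (1 - p i) / ↑n) *
        ((empDist ω j - p j) ^ 2 / p j - (1 - p j) / ↑n)
      = (1 / ((n:ℝ) ^ 4 * p i * p j)) * (Sf p i n ω ^ 2 * Sf p j n ω ^ 2)
        + (-((1 - p j) / ((n:ℝ) ^ 3 * p i))) * (Sf p i n ω ^ 2)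
        + (-((1 - p i) / ((n:ℝ) ^ 3 * p j))) * (Sf p j n ω ^ 2)
        + (1 - p i) * (1 - p j) / (n:ℝ) ^ 2 := by
    intro ω
    rw [hemp i ω, hemp j ω]
    field_simp
    ring
  simp only [hfun, expect_add, expect_cmul, expect_const p hsum]
  rw [h20, h02, h22]
  field_simp
  ring
end

section
/- For every integer k ≥ 2, every probability vector P = (p_1,…,p_k) with all p_i > 0, and every integer n ≥ 1, the variance of the cross-entropy part of the plug-in estimator satisfies Var[Σ_{i=1}^k p̂_i·log(1/p_i)] ≤ (1 + log k)²/n. -/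
/-! The statistic is the sample mean of the i.i.d. variables `log (1 / p (X j))`, so its variance
is `σ² / n`, where `σ²` is the variance of one draw. A variance is at most the mean square
deviation from any constant; for the constant `log k` the deviation is `-log (k p)`, and
`p log² (k p) ≤ 1 / k + p log² k` termwise (from `u log² u ≤ 1` on `[0, 1]` where `k p ≤ 1`, from
monotonicity of `log` where `k p > 1`). Summing gives `σ² ≤ 1 + log² k ≤ (1 + log k)²`. -/

open Real

section Expectation

variable {n k : ℕ} (p : Fin k → ℝ)

lemma expect_sum {ι : Type*} (s : Finset ι) (f : ι → (Fin n → Fin k) → ℝ) :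
    expect p (fun ω => ∑ i ∈ s, f i ω) = ∑ i ∈ s, expect p (f i) := by
  simp only [expect, Finset.mul_sum]
  exact Finset.sum_comm

lemma expect_const_mul (c : ℝ) (f : (Fin n → Fin k) → ℝ) :
    expect p (fun ω => c * f ω) = c * expect p f := by
  simp only [expect, Finset.mul_sum, mul_left_comm]

lemma expect_prod_comp_eval (h : Fin n → Fin k → ℝ) :
    expect p (fun ω => ∏ j, h j (ω j)) = ∏ j, ∑ x, p x * h j x := by
  simp only [expect, ← Finset.prod_mul_distrib]
  rw [Finset.prod_univ_sum, Fintype.piFinset_univ]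

variable {p}

lemma expect_comp_eval (hsum : ∑ x, p x = 1) (j : Fin n) (g : Fin k → ℝ) :
    expect p (fun ω => g (ω j)) = ∑ x, p x * g x := by
  simpa [apply_ite, hsum] using expect_prod_comp_eval p (fun i x => if i = j then g x else 1)

lemma expect_mul_comp_eval_eq_zero {g : Fin k → ℝ} (hg : ∑ x, p x * g x = 0) {j j' : Fin n}
    (hj : j ≠ j') (g' : Fin k → ℝ) : expect p (fun ω => g (ω j) * g' (ω j')) = 0 := by
  have h := expect_prod_comp_eval p fun i x =>
    (if i = j then g x else 1) * (if i = j' then g' x else 1)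
  simp only [Finset.prod_mul_distrib, Finset.prod_ite_eq', Finset.mem_univ, if_true] at h
  rw [h]
  exact Finset.prod_eq_zero (Finset.mem_univ j) (by simp [hj, hg])

lemma expect_sq_sum_comp_eval (hsum : ∑ x, p x = 1) {g : Fin k → ℝ} (hg : ∑ x, p x * g x = 0) :
    expect p (fun ω : Fin n → Fin k => (∑ j, g (ω j)) ^ 2) = n * ∑ x, p x * g x ^ 2 := by
  simp only [sq, Finset.sum_mul_sum, expect_sum]
  have hdiag : ∀ j : Fin n,
      ∑ j', expect p (fun ω => g (ω j) * g (ω j')) = ∑ x, p x * (g x * g x) := fun j => by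
    rw [Finset.sum_eq_single j (fun j' _ hj' => expect_mul_comp_eval_eq_zero hg hj'.symm g)
      (by simp)]
    exact expect_comp_eval hsum j fun x => g x * g x
  simp [hdiag]

end Expectation

lemma sum_empDist_mul {n k : ℕ} (ω : Fin n → Fin k) (L : Fin k → ℝ) :
    ∑ i, empDist ω i * L i = (n : ℝ)⁻¹ * ∑ j, L (ω j) := by
  rw [← Finset.sum_fiberwise Finset.univ ω, Finset.mul_sum]
  refine Finset.sum_congr rfl fun i _ => ?_
  rw [Finset.sum_congr rfl fun j hj => by rw [(Finset.mem_filter.mp hj).2], Finset.sum_const,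
    nsmul_eq_mul, empDist]
  ring

lemma var_sample_mean {n k : ℕ} {p : Fin k → ℝ} (hsum : ∑ x, p x = 1) (L : Fin k → ℝ) :
    var p (fun ω : Fin n → Fin k => (n : ℝ)⁻¹ * ∑ j, L (ω j)) =
      (∑ x, p x * (L x - ∑ y, p y * L y) ^ 2) / n := by
  set μ := ∑ y, p y * L y
  have hmean : expect p (fun ω : Fin n → Fin k => (n : ℝ)⁻¹ * ∑ j, L (ω j)) =
      (n : ℝ)⁻¹ * (n * μ) := by
    simp [expect_const_mul, expect_sum, expect_comp_eval hsum, μ]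
  have hcentered : ∑ x, p x * (L x - μ) = 0 := by
    simp [mul_sub, Finset.sum_sub_distrib, ← Finset.sum_mul, hsum, μ]
  have hdev : ∀ ω : Fin n → Fin k, (n : ℝ)⁻¹ * ∑ j, L (ω j) - (n : ℝ)⁻¹ * (n * μ) =
      (n : ℝ)⁻¹ * ∑ j, (L (ω j) - μ) := fun ω => by
    simp [Finset.sum_sub_distrib, mul_sub]
  simp only [var, hmean, hdev, mul_pow, expect_const_mul, expect_sq_sum_comp_eval hsum hcentered]
  rcases eq_or_ne (n : ℝ) 0 with hn | hn
  · simp [hn]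
  · field_simp

lemma sq_le_exp {t : ℝ} (ht : 0 ≤ t) : t ^ 2 ≤ exp t := by
  have h := sum_le_exp_of_nonneg ht 4
  simp only [Finset.sum_range_succ, Finset.sum_range_zero, Nat.factorial] at h
  norm_num at h
  -- `1 + t - t² / 2 + t³ / 6 = 1 + 5 t / 8 + t (t - 3 / 2)² / 6`
  nlinarith [mul_nonneg ht (sq_nonneg (t - 3 / 2))]

lemma mul_log_sq_le_one {u : ℝ} (hu0 : 0 ≤ u) (hu1 : u ≤ 1) : u * log u ^ 2 ≤ 1 := by
  rcases hu0.eq_or_lt with rfl | hu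
  · simp
  have h := sq_le_exp (neg_nonneg.mpr (log_nonpos hu0 hu1))
  rw [neg_sq, exp_neg, exp_log hu] at h
  calc u * log u ^ 2 ≤ u * u⁻¹ := by gcongr
    _ = 1 := mul_inv_cancel₀ hu.ne'

lemma mul_log_mul_sq_le {c q : ℝ} (hc : 0 < c) (hq0 : 0 ≤ q) (hq1 : q ≤ 1) :
    q * log (c * q) ^ 2 ≤ c⁻¹ + q * log c ^ 2 := by
  rcases le_or_gt (c * q) 1 with hcq | hcq
  · have h := mul_log_sq_le_one (mul_nonneg hc.le hq0) hcq
    have : q * log (c * q) ^ 2 = c⁻¹ * (c * q * log (c * q) ^ 2) := by field_simp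
    nlinarith [mul_le_mul_of_nonneg_left h (inv_nonneg.mpr hc.le),
      mul_nonneg hq0 (sq_nonneg (log c))]
  · have hlog0 : 0 ≤ log (c * q) := log_nonneg hcq.le
    have hlog : log (c * q) ≤ log c := log_le_log (by linarith) (by nlinarith)
    have : q * log (c * q) ^ 2 ≤ q * log c ^ 2 := by gcongr
    linarith [inv_nonneg.mpr hc.le]

lemma sum_mul_log_card_mul_sq_le {ι : Type*} [Fintype ι] {p : ι → ℝ} (hp : ∀ i, 0 ≤ p i)
    (hsum : ∑ i, p i = 1) :
    ∑ i, p i * log (Fintype.card ι * p i) ^ 2 ≤ 1 + log (Fintype.card ι) ^ 2 := by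
  obtain ⟨i₀, -, -⟩ := Finset.exists_ne_zero_of_sum_ne_zero (hsum ▸ one_ne_zero)
  have hcard : (0 : ℝ) < Fintype.card ι := by exact_mod_cast Fintype.card_pos_iff.mpr ⟨i₀⟩
  have hp1 : ∀ i, p i ≤ 1 := fun i =>
    hsum ▸ Finset.single_le_sum (fun j _ => hp j) (Finset.mem_univ i)
  calc ∑ i, p i * log (Fintype.card ι * p i) ^ 2
      ≤ ∑ i, ((Fintype.card ι : ℝ)⁻¹ + p i * log (Fintype.card ι) ^ 2) :=
        Finset.sum_le_sum fun i _ => mul_log_mul_sq_le hcard (hp i) (hp1 i)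
    _ = 1 + log (Fintype.card ι) ^ 2 := by
        rw [Finset.sum_add_distrib, ← Finset.sum_mul, hsum, Finset.sum_const, Finset.card_univ,
          nsmul_eq_mul, mul_inv_cancel₀ hcard.ne', one_mul]

lemma sum_mul_sq_sub_weighted_mean_le {ι : Type*} [Fintype ι] {p : ι → ℝ} (hsum : ∑ i, p i = 1)
    (L : ι → ℝ) (c : ℝ) :
    ∑ i, p i * (L i - ∑ j, p j * L j) ^ 2 ≤ ∑ i, p i * (L i - c) ^ 2 := by
  set μ := ∑ j, p j * L j
  have h : ∑ i, p i * (L i - c) ^ 2 = ∑ i, p i * (L i - μ) ^ 2 + (μ - c) ^ 2 := by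
    have : ∀ i, p i * (L i - c) ^ 2 =
        p i * (L i - μ) ^ 2 + 2 * (μ - c) * (p i * L i) + (c ^ 2 - μ ^ 2) * p i := fun i => by ring
    simp only [this, Finset.sum_add_distrib, ← Finset.mul_sum, hsum]
    ring
  linarith [sq_nonneg (μ - c)]

theorem cross_entropy_variance_bound_general (n k : ℕ)
    (p : Fin k → ℝ) (hpos : ∀ i, 0 < p i) (hsum : ∑ i, p i = 1) :
    var p (fun ω : Fin n → Fin k => ∑ i, empDist ω i * Real.log (1 / p i)) ≤
      (1 + Real.log k) ^ 2 / n := by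
  set L : Fin k → ℝ := fun i => log (1 / p i)
  have hL : ∀ i, (L i - log k) ^ 2 = log (k * p i) ^ 2 := fun i => by
    have hk : (k : ℝ) ≠ 0 := Nat.cast_ne_zero.mpr (Fin.pos i).ne'
    rw [log_mul hk (hpos i).ne', ← neg_sq]
    simp only [L, one_div, log_inv]
    ring
  rw [funext fun ω => sum_empDist_mul ω L, var_sample_mean hsum L]
  gcongr
  calc ∑ i, p i * (L i - ∑ j, p j * L j) ^ 2 ≤ ∑ i, p i * (L i - log k) ^ 2 :=
        sum_mul_sq_sub_weighted_mean_le hsum L (log k)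
    _ = ∑ i, p i * log (Fintype.card (Fin k) * p i) ^ 2 := by simp only [hL, Fintype.card_fin]
    _ ≤ 1 + log k ^ 2 := by
        simpa using sum_mul_log_card_mul_sq_le (fun i => (hpos i).le) hsum
    _ ≤ (1 + log k) ^ 2 := by nlinarith [log_natCast_nonneg k]

/-- Variance of the cross-entropy part of the plug-in estimator:
`Var[∑ᵢ p̂ᵢ·log(1/pᵢ)] ≤ (1 + log k)²/n`. -/
theorem cross_entropy_variance_bound (n k : ℕ) (hn : 1 ≤ n) (hk : 2 ≤ k)
    (p : Fin k → ℝ) (hpos : ∀ i, 0 < p i) (hsum : ∑ i, p i = 1) :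
    var p (fun ω : Fin n → Fin k => ∑ i, empDist ω i * Real.log (1 / p i)) ≤
      (1 + Real.log k) ^ 2 / n :=
  cross_entropy_variance_bound_general n k p hpos hsum
end
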